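/- For any hypergraph H and any two vertices x, y with d(x,y) ≥ 2, the h-LLY–Ricci curvature satisfies κ̃(h;x,y) ≤ 2h'(1)/(h(1)·d(x,y)). -/

import Mathlib

open Filter Set Classical

noncomputable section

/-- A hypergraph: a vertex type together with a family of hyperedges. -/
structure Hypergraph' (V : Type*) where
  E : Set (Set V)

namespace Hypergraph'

variable {V : Type*}

/-- Two distinct vertices are adjacent if some hyperedge contains both. -/
def Adj (H : Hypergraph' V) (x y : V) : Prop :=
  x ≠ y ∧ ∃ e ∈ H.E, x ∈ e ∧ y ∈ e

/-- There is a path of length `n` from `x` to `y` (each consecutive pair lies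
in a common hyperedge). -/
def IsPath (H : Hypergraph' V) (x y : V) (n : ℕ) : Prop :=
  ∃ f : ℕ → V, f 0 = x ∧ f n = y ∧ ∀ i < n, ∃ e ∈ H.E, f i ∈ e ∧ f (i + 1) ∈ e

/-- The graph distance on a hypergraph: the shortest length of a path. -/
def dist (H : Hypergraph' V) (x y : V) : ℕ :=
  sInf {n | H.IsPath x y n}

def Connected (H : Hypergraph' V) : Prop := ∀ x y : V, ∃ n, H.IsPath x y n

def LocallyFinite (H : Hypergraph' V) : Prop := ∀ x : V, {y | H.Adj x y}.Finite

/-- A hypergraph is simple if no hyperedge is contained in a different one. -/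
def Simple (H : Hypergraph' V) : Prop :=
  ∀ e₁ ∈ H.E, ∀ e₂ ∈ H.E, e₁ ≠ e₂ → ¬e₁ ⊆ e₂

/-- The degree of a vertex: the number of its neighbours. -/
def degree (H : Hypergraph' V) (x : V) : ℕ := {y | H.Adj x y}.ncard

end Hypergraph'

/-- A finitely supported probability function on `V`. -/
def IsProb {V : Type*} (μ : V → ℝ) : Prop :=
  (∀ v, 0 ≤ μ v) ∧ (Function.support μ).Finite ∧ ∑' v, μ v = 1

/-- A coupling of two probability functions. -/
def IsCoupling {V : Type*} (π : V → V → ℝ) (μ ν : V → ℝ) : Prop :=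
  (∀ x y, 0 ≤ π x y) ∧ (∀ x, ∑' y, π x y = μ x) ∧ (∀ y, ∑' x, π x y = ν y)

/-- The L¹-Wasserstein distance with respect to the graph distance of `H`. -/
def W1 {V : Type*} (H : Hypergraph' V) (μ ν : V → ℝ) : ℝ :=
  sInf {c | ∃ π, IsCoupling π μ ν ∧
    c = ∑' p : V × V, (H.dist p.1 p.2 : ℝ) * π p.1 p.2}

/-- A sequence of probability measures from `μ` to `ν` each of whose increments
is supported in a single hyperedge. -/
def WhAdmissible {V : Type*} (H : Hypergraph' V) (μ ν : V → ℝ) (I : ℕ)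
    (ξ : ℕ → V → ℝ) : Prop :=
  ξ 0 = μ ∧ ξ I = ν ∧ (∀ i ≤ I, IsProb (ξ i)) ∧
    ∀ i < I, ∃ e ∈ H.E, Function.support (fun v => ξ (i + 1) v - ξ i v) ⊆ e

/-- The new transport distance `W_h`. -/
def Wh {V : Type*} (H : Hypergraph' V) (h : ℝ → ℝ) (μ ν : V → ℝ) : ℝ :=
  sInf {c | ∃ I ξ, WhAdmissible H μ ν I ξ ∧
    c = ∑ i ∈ Finset.range I, h (W1 H (ξ i) (ξ (i + 1)))}

/-- Assumptions on the concave cost function `h`, with one-sided derivatives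
`D0 = h'(0)` and `D1 = h'(1)`. -/
structure CostFn (h : ℝ → ℝ) (D0 D1 : ℝ) : Prop where
  nonneg : ∀ x ∈ Set.Icc (0 : ℝ) 1, 0 ≤ h x
  mono : MonotoneOn h (Set.Icc (0 : ℝ) 1)
  cont : ContinuousOn h (Set.Icc (0 : ℝ) 1)
  concave : ConcaveOn ℝ (Set.Icc (0 : ℝ) 1) h
  zero : h 0 = 0
  d0_pos : 0 < D0
  d0 : Filter.Tendsto (fun t => h t / t) (nhdsWithin 0 (Set.Ioi 0)) (nhds D0)
  d1 : Filter.Tendsto (fun t => (h 1 - h t) / (1 - t))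
    (nhdsWithin 1 (Set.Iio 1)) (nhds D1)

/-- The Dirac measure at a point, as a probability function. -/
def dirac {V : Type*} (x : V) : V → ℝ := fun v => if v = x then 1 else 0

/-- The `α`-lazy uniform random walk at `x`. -/
def rw {V : Type*} (H : Hypergraph' V) (α : ℝ) (x : V) : V → ℝ :=
  fun v => if v = x then α else if H.Adj x v then (1 - α) / (H.degree x) else 0

/-- The `(α,h)`-Ollivier–Ricci curvature. -/
def ORic {V : Type*} (H : Hypergraph' V) (h : ℝ → ℝ) (α : ℝ) (x y : V) : ℝ :=
  1 - Wh H h (rw H α x) (rw H α y) / Wh H h (dirac x) (dirac y)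

/-- The `h`-LLY–Ricci curvature. -/
def hLLY {V : Type*} (H : Hypergraph' V) (h : ℝ → ℝ) (x y : V) : ℝ :=
  Filter.liminf (fun α => ORic H h α x y / (1 - α)) (nhdsWithin 1 (Set.Iio 1))

end

/-!
Fix `α ∈ [0, 1]` and `d = d(x, y) ≥ 2`. For `j < d` the function `v ↦ min (max (d(x, v) - j) 0) 1`
is `1`-Lipschitz, so its pairing changes along a step of an admissible sequence by at most the
`W1` cost of the step; a step moves mass inside one hyperedge and therefore changes this pairing
for at most one `j`. Since the concave `h` with `h 0 = 0` is subadditive, summing over `j` gives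
`W_h(m_x^α, m_y^α) ≥ 2 h(α) + (d - 2) h(1)`, and for `α = 1` (Dirac masses) this is attained along
a geodesic. Hence `κ_α(x, y) ≤ 2 (h(1) - h(α)) / (d h(1))`; dividing by `1 - α` and letting
`α → 1` gives the bound.

On an infinite vertex type the `tsum`-based `W1` vanishes identically, and the `liminf` of the
then unbounded curvature quotient is the junk value `0`.
-/

open Topology

namespace Hypergraph'

variable {V : Type*} {H : Hypergraph' V}

theorem isPath_zero (x : V) : H.IsPath x x 0 :=
  ⟨fun _ => x, rfl, rfl, by simp⟩

theorem IsPath.symm {x y : V} {n : ℕ} (hp : H.IsPath x y n) : H.IsPath y x n := by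
  obtain ⟨f, hf0, hfn, hstep⟩ := hp
  refine ⟨fun i => f (n - i), by simpa using hfn, by simpa using hf0, fun i hi => ?_⟩
  obtain ⟨e, he, h1, h2⟩ := hstep (n - (i + 1)) (by omega)
  refine ⟨e, he, ?_, h1⟩
  rwa [show n - (i + 1) + 1 = n - i by omega] at h2

theorem IsPath.trans {x y z : V} {m n : ℕ} (h1 : H.IsPath x y m) (h2 : H.IsPath y z n) :
    H.IsPath x z (m + n) := by
  obtain ⟨f, hf0, hfm, hf⟩ := h1
  obtain ⟨g, hg0, hgn, hg⟩ := h2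
  have hglue : ∀ i, m ≤ i → (if i ≤ m then f i else g (i - m)) = g (i - m) := by
    intro i hi
    split_ifs with him
    · rw [show i = m by omega, hfm, Nat.sub_self, hg0]
    · rfl
  refine ⟨fun i => if i ≤ m then f i else g (i - m), by simpa using hf0, ?_, fun i hi => ?_⟩
  · show (if m + n ≤ m then f (m + n) else g (m + n - m)) = z
    rwa [hglue _ (by omega), Nat.add_sub_cancel_left]
  · by_cases him : i < m
    · obtain ⟨e, he, ha, hb⟩ := hf i him
      exact ⟨e, he, by simpa [him.le] using ha, by simpa [Nat.succ_le_of_lt him] using hb⟩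
    · obtain ⟨e, he, ha, hb⟩ := hg (i - m) (by omega)
      refine ⟨e, he, ?_, ?_⟩
      · simpa only [hglue i (by omega)] using ha
      · show (if i + 1 ≤ m then f (i + 1) else g (i + 1 - m)) ∈ e
        rwa [hglue _ (by omega), show i + 1 - m = i - m + 1 by omega]

theorem dist_le_of_isPath {x y : V} {n : ℕ} (hp : H.IsPath x y n) : H.dist x y ≤ n :=
  Nat.sInf_le hp

@[simp]
theorem dist_self (x : V) : H.dist x x = 0 :=
  Nat.le_zero.mp (dist_le_of_isPath (isPath_zero x))

theorem dist_le_one_of_mem {e : Set V} {a b : V} (he : e ∈ H.E) (ha : a ∈ e) (hb : b ∈ e) :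
    H.dist a b ≤ 1 := by
  refine dist_le_of_isPath ⟨fun i => if i = 0 then a else b, by simp, by simp, fun i hi => ?_⟩
  obtain rfl : i = 0 := by omega
  exact ⟨e, he, by simpa using ha, by simpa using hb⟩

theorem dist_le_one_of_adj {a b : V} (hab : H.Adj a b) : H.dist a b ≤ 1 :=
  let ⟨_, _, he, ha, hb⟩ := hab
  dist_le_one_of_mem he ha hb

theorem IsPath.eq_of_forall_not_adj {x y : V} {n : ℕ} (hp : H.IsPath x y n)
    (hx : ∀ v, ¬H.Adj x v) : y = x := by
  obtain ⟨f, hf0, hfn, hstep⟩ := hp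
  suffices ∀ i ≤ n, f i = x from hfn ▸ this n le_rfl
  intro i hi
  induction i with
  | zero => exact hf0
  | succ i ih =>
    obtain ⟨e, he, h1, h2⟩ := hstep i hi
    by_contra hne
    exact hx _ ⟨Ne.symm hne, e, he, ih (by omega) ▸ h1, h2⟩

namespace Connected

variable (hconn : H.Connected)
include hconn

theorem isPath_dist (x y : V) : H.IsPath x y (H.dist x y) :=
  Nat.sInf_mem (hconn x y)

theorem eq_of_dist_eq_zero {x y : V} (hd : H.dist x y = 0) : x = y := by
  obtain ⟨f, hf0, hfn, -⟩ := hconn.isPath_dist x y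
  rw [← hf0, ← hfn, hd]

theorem dist_triangle (x y z : V) : H.dist x z ≤ H.dist x y + H.dist y z :=
  dist_le_of_isPath ((hconn.isPath_dist x y).trans (hconn.isPath_dist y z))

theorem dist_comm (x y : V) : H.dist x y = H.dist y x :=
  le_antisymm (dist_le_of_isPath (hconn.isPath_dist y x).symm)
    (dist_le_of_isPath (hconn.isPath_dist x y).symm)

theorem abs_dist_sub_dist_le (x a b : V) :
    |(H.dist x a : ℝ) - H.dist x b| ≤ H.dist a b := by
  have h1 : (H.dist x a : ℝ) ≤ H.dist x b + H.dist a b := by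
    exact_mod_cast hconn.dist_comm a b ▸ hconn.dist_triangle x b a
  have h2 : (H.dist x b : ℝ) ≤ H.dist x a + H.dist a b := by
    exact_mod_cast hconn.dist_triangle x a b
  rw [abs_sub_le_iff]
  constructor <;> linarith

theorem degree_pos [Finite V] {x y : V} (hxy : x ≠ y) : 0 < H.degree x := by
  rw [degree, Set.ncard_pos]
  by_contra h
  obtain ⟨n, hp⟩ := hconn x y
  exact hxy (hp.eq_of_forall_not_adj fun v hv => h ⟨v, hv⟩).symm

end Connected

end Hypergraph'

namespace CostFn

variable {h : ℝ → ℝ} {D0 D1 : ℝ} (hc : CostFn h D0 D1)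
include hc

theorem mul_apply_le {s t : ℝ} (hs : s ∈ Icc (0 : ℝ) 1) (ht : t ∈ Icc (0 : ℝ) 1) :
    t * h s ≤ h (t * s) := by
  have := hc.concave.2 hs ⟨le_rfl, zero_le_one⟩ ht.1 (sub_nonneg.2 ht.2) (add_sub_cancel t 1)
  simpa [hc.zero] using this

theorem apply_add_le {a b : ℝ} (ha : 0 ≤ a) (hb : 0 ≤ b) (hab : a + b ≤ 1) :
    h (a + b) ≤ h a + h b := by
  rcases (add_nonneg ha hb).eq_or_lt with hs | hs
  · obtain ⟨rfl, rfl⟩ : a = 0 ∧ b = 0 := ⟨by linarith, by linarith⟩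
    simp [hc.zero]
  have hmem : a + b ∈ Icc (0 : ℝ) 1 := ⟨hs.le, hab⟩
  have hfrac : ∀ c, 0 ≤ c → c ≤ a + b → c / (a + b) * h (a + b) ≤ h c := fun c hc0 hcs => by
    simpa [div_mul_cancel₀ c hs.ne'] using
      hc.mul_apply_le hmem ⟨div_nonneg hc0 hs.le, (div_le_one hs).2 hcs⟩
  have hsplit : a / (a + b) * h (a + b) + b / (a + b) * h (a + b) = h (a + b) := by
    field_simp
  linarith [hfrac a ha (by linarith), hfrac b hb (by linarith)]

theorem apply_le_sum {ι : Type*} (S : Finset ι) (t : ι → ℝ) (ht : ∀ i ∈ S, t i ∈ Icc (0 : ℝ) 1)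
    {c : ℝ} (hc01 : c ∈ Icc (0 : ℝ) 1) (hle : c ≤ ∑ i ∈ S, t i) :
    h c ≤ ∑ i ∈ S, h (t i) := by
  induction S using Finset.induction_on generalizing c with
  | empty =>
    obtain rfl : c = 0 := le_antisymm (by simpa using hle) hc01.1
    simp [hc.zero]
  | @insert a S haS ih =>
    rw [Finset.sum_insert haS] at hle ⊢
    have hta := ht a (Finset.mem_insert_self a S)
    have hrest : 0 ≤ ∑ i ∈ S, h (t i) := Finset.sum_nonneg fun i hi =>
      hc.nonneg _ (ht i (Finset.mem_insert_of_mem hi))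
    rcases le_total c (t a) with hca | hac
    · linarith [hc.mono hc01 hta hca]
    · have hIH : h (c - t a) ≤ ∑ i ∈ S, h (t i) :=
        ih (fun i hi => ht i (Finset.mem_insert_of_mem hi))
          ⟨by linarith, by linarith [hc01.2, hta.1]⟩ (by linarith)
      have := hc.apply_add_le hta.1 (sub_nonneg.2 hac) (by linarith [hc01.2])
      rw [add_sub_cancel] at this
      linarith

theorem sum_apply_le_of_pairwiseDisjoint {ι κ : Type*} [DecidableEq ι] (S : Finset κ)
    (T : κ → Finset ι) (U : Finset ι) (hTU : ∀ j ∈ S, T j ⊆ U)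
    (hdisj : (S : Set κ).PairwiseDisjoint T) (t : ι → ℝ) (ht : ∀ i ∈ U, t i ∈ Icc (0 : ℝ) 1)
    (a : κ → ℝ) (ha : ∀ j ∈ S, a j ∈ Icc (0 : ℝ) 1) (hle : ∀ j ∈ S, a j ≤ ∑ i ∈ T j, t i) :
    ∑ j ∈ S, h (a j) ≤ ∑ i ∈ U, h (t i) :=
  calc ∑ j ∈ S, h (a j) ≤ ∑ j ∈ S, ∑ i ∈ T j, h (t i) :=
        Finset.sum_le_sum fun j hj =>
          hc.apply_le_sum _ _ (fun i hi => ht i (hTU j hj hi)) (ha j hj) (hle j hj)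
    _ = ∑ i ∈ S.biUnion T, h (t i) := (Finset.sum_biUnion hdisj).symm
    _ ≤ ∑ i ∈ U, h (t i) :=
        Finset.sum_le_sum_of_subset_of_nonneg (Finset.biUnion_subset.2 hTU)
          fun i hi _ => hc.nonneg _ (ht i hi)

theorem apply_one_pos : 0 < h 1 := by
  obtain ⟨t, ht, ht01⟩ := ((hc.d0.eventually (eventually_gt_nhds hc.d0_pos)).and
    (Ioo_mem_nhdsGT (zero_lt_one' ℝ))).exists
  have hht : 0 < h t := (div_pos_iff_of_pos_right ht01.1).1 ht
  exact hht.trans_le (hc.mono ⟨ht01.1.le, ht01.2.le⟩ ⟨zero_le_one, le_rfl⟩ ht01.2.le)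

theorem D1_nonneg : 0 ≤ D1 :=
  ge_of_tendsto hc.d1 <| eventually_of_mem (Ioo_mem_nhdsLT (zero_lt_one' ℝ)) fun _ ht =>
    div_nonneg (sub_nonneg.2 (hc.mono ⟨ht.1.le, ht.2.le⟩ ⟨zero_le_one, le_rfl⟩ ht.2.le))
      (sub_nonneg.2 ht.2.le)

end CostFn

theorem not_summable_of_one_le {ι : Type*} {f : ι → ℝ} {s : Set ι} (hs : s.Infinite)
    (h1 : ∀ i ∈ s, 1 ≤ f i) : ¬Summable f := fun hsum =>
  hs <| (eventually_cofinite.1 (hsum.tendsto_cofinite_zero.eventually (gt_mem_nhds one_pos))).subset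
    fun i hi => not_lt.2 (h1 i hi)

theorem Real.liminf_eq_zero_of_tendsto_atTop {α : Type*} {f : α → ℝ} {l : Filter α}
    (hf : Tendsto f l atTop) : liminf f l = 0 := by
  rw [liminf_eq, ← Real.sSup_univ]
  congr
  ext a
  simpa using hf.eventually_ge_atTop a

theorem tendsto_one_div_one_sub_nhdsLT_one :
    Tendsto (fun α : ℝ => 1 / (1 - α)) (𝓝[<] 1) atTop := by
  simp only [one_div]
  refine tendsto_inv_nhdsGT_zero.comp (tendsto_nhdsWithin_iff.2 ⟨?_, ?_⟩)
  · have : Tendsto (fun α : ℝ => 1 - α) (𝓝[<] 1) (𝓝 (1 - 1)) :=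
      (tendsto_const_nhds.sub tendsto_id).mono_left nhdsWithin_le_nhds
    rwa [sub_self] at this
  · exact eventually_nhdsWithin_of_forall fun α (hα : α < 1) => sub_pos.2 hα

/-- The hypothesis `0 ≤ c` accounts for the junk value `sSup ∅ = 0`, taken when `f` is not
eventually bounded below. -/
theorem Real.liminf_le_of_eventually_le_of_tendsto {ι : Type*} {l : Filter ι} [l.NeBot]
    {f g : ι → ℝ} {c : ℝ} (hc : 0 ≤ c) (hfg : ∀ᶠ i in l, f i ≤ g i) (hg : Tendsto g l (𝓝 c)) :
    liminf f l ≤ c := by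
  rw [liminf_eq]
  refine Real.sSup_le (fun a ha => ge_of_tendsto hg ?_) hc
  filter_upwards [ha, hfg] with i h1 h2 using h1.trans h2

theorem W1_nonneg {V : Type*} (H : Hypergraph' V) (μ ν : V → ℝ) : 0 ≤ W1 H μ ν :=
  Real.sInf_nonneg <| by
    rintro c ⟨π, hπ, rfl⟩
    exact tsum_nonneg fun p => mul_nonneg (Nat.cast_nonneg _) (hπ.1 _ _)

theorem IsProb.sum_eq_one {V : Type*} [Fintype V] {μ : V → ℝ} (hμ : IsProb μ) :
    ∑ v, μ v = 1 := by
  rw [← hμ.2.2, tsum_fintype]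

theorem isCoupling_mul {V : Type*} {μ ν : V → ℝ} (hμ : IsProb μ) (hν : IsProb ν) :
    IsCoupling (fun a b => μ a * ν b) μ ν :=
  ⟨fun a b => mul_nonneg (hμ.1 a) (hν.1 b), fun a => by rw [tsum_mul_left, hν.2.2, mul_one],
    fun b => by rw [tsum_mul_right, hμ.2.2, one_mul]⟩

theorem W1_le_of_isCoupling {V : Type*} {H : Hypergraph' V} {μ ν : V → ℝ} {π : V → V → ℝ}
    (hπ : IsCoupling π μ ν) : W1 H μ ν ≤ ∑' p : V × V, (H.dist p.1 p.2 : ℝ) * π p.1 p.2 := by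
  refine csInf_le ⟨0, ?_⟩ ⟨π, hπ, rfl⟩
  rintro c ⟨π', hπ', rfl⟩
  exact tsum_nonneg fun p => mul_nonneg (Nat.cast_nonneg _) (hπ'.1 _ _)

theorem tsum_mul_add_ite_eq {V : Type*} {μ ν : V → ℝ} {R : Set V} (hν : ∑' b, ν b = 1)
    (hR : R.Infinite) (hμR : ∀ a ∈ R, μ a = 0) (a : V) :
    ∑' b, (μ a * ν b + if a ∈ R ∧ b ∈ R then 1 else 0) = μ a := by
  by_cases ha : a ∈ R
  · rw [hμR a ha, tsum_eq_zero_of_not_summable]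
    exact not_summable_of_one_le hR fun b hb => by simp [ha, hb]
  · simp [ha, tsum_mul_left, hν]

section Infinite

variable {V : Type*} [Infinite V] {H : Hypergraph' V}

/-- On an infinite vertex set `W1` degenerates: adding mass `1` at every pair of vertices outside
both supports keeps the marginals (the new rows and columns are non-summable, so their `tsum` is
`0`) and makes the cost non-summable, hence `0`. -/
theorem W1_eq_zero_of_infinite (hconn : H.Connected) {μ ν : V → ℝ} (hμ : IsProb μ)
    (hν : IsProb ν) : W1 H μ ν = 0 := by
  obtain ⟨R, hR, hμR, hνR⟩ : ∃ R : Set V, R.Infinite ∧ (∀ a ∈ R, μ a = 0) ∧ ∀ a ∈ R, ν a = 0 :=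
    ⟨_, (hμ.2.1.union hν.2.1).infinite_compl,
      fun _ ha => Function.notMem_support.1 fun h => ha (Or.inl h),
      fun _ ha => Function.notMem_support.1 fun h => ha (Or.inr h)⟩
  set π : V → V → ℝ := fun a b => μ a * ν b + if a ∈ R ∧ b ∈ R then 1 else 0
  have hπ : IsCoupling π μ ν := by
    refine ⟨fun a b => add_nonneg (mul_nonneg (hμ.1 a) (hν.1 b)) (by positivity),
      tsum_mul_add_ite_eq hν.2.2 hR hμR, fun b => ?_⟩
    simpa only [π, mul_comm (μ _), and_comm] using tsum_mul_add_ite_eq hμ.2.2 hR hνR b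
  obtain ⟨a₀, ha₀⟩ := hR.nonempty
  have hcost : ∑' p : V × V, (H.dist p.1 p.2 : ℝ) * π p.1 p.2 = 0 := by
    refine tsum_eq_zero_of_not_summable (not_summable_of_one_le
      (((hR.sdiff (Set.finite_singleton a₀)).image (Prod.mk_right_injective a₀).injOn)) ?_)
    rintro _ ⟨b, ⟨hb, hba⟩, rfl⟩
    have hd : (1 : ℝ) ≤ H.dist a₀ b := by
      exact_mod_cast Nat.one_le_iff_ne_zero.2 fun h0 => hba (hconn.eq_of_dist_eq_zero h0).symm
    have hπ1 : 1 ≤ π a₀ b := by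
      simp only [π, hμR a₀ ha₀, zero_mul, zero_add, ha₀, hb, and_self, if_true, le_refl]
    nlinarith
  exact le_antisymm ((W1_le_of_isCoupling hπ).trans_eq hcost) (W1_nonneg H μ ν)

theorem Wh_eq_zero_of_infinite (hconn : H.Connected) {h : ℝ → ℝ} (hh0 : h 0 = 0)
    (μ ν : V → ℝ) : Wh H h μ ν = 0 := by
  have hsub : {c | ∃ I ξ, WhAdmissible H μ ν I ξ ∧
      c = ∑ i ∈ Finset.range I, h (W1 H (ξ i) (ξ (i + 1)))} ⊆ {0} := by
    rintro c ⟨I, ξ, hadm, rfl⟩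
    refine Finset.sum_eq_zero fun i hi => ?_
    have hi : i < I := Finset.mem_range.1 hi
    rw [W1_eq_zero_of_infinite hconn (hadm.2.2.1 i hi.le) (hadm.2.2.1 (i + 1) hi), hh0]
  rw [Wh]
  rcases Set.subset_singleton_iff_eq.1 hsub with hS | hS <;> simp [hS]

theorem hLLY_eq_zero_of_infinite (hconn : H.Connected) {h : ℝ → ℝ} (hh0 : h 0 = 0) (x y : V) :
    hLLY H h x y = 0 := by
  simp only [hLLY, ORic, Wh_eq_zero_of_infinite hconn hh0, div_zero, sub_zero]
  exact Real.liminf_eq_zero_of_tendsto_atTop tendsto_one_div_one_sub_nhdsLT_one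

end Infinite

noncomputable def excessCoupling {V : Type*} [Fintype V] (μ ν : V → ℝ) (a b : V) : ℝ :=
  (if a = b then min (μ a) (ν a) else 0) +
    max (μ a - ν a) 0 * max (ν b - μ b) 0 / ∑ v, max (μ v - ν v) 0

section Finite

open Hypergraph'

variable {V : Type*} [Fintype V] {H : Hypergraph' V} {μ ν : V → ℝ}

theorem sum_max_sub_zero_comm (hμ : IsProb μ) (hν : IsProb ν) :
    ∑ v, max (ν v - μ v) 0 = ∑ v, max (μ v - ν v) 0 := by
  have h : ∑ v, (max (μ v - ν v) 0 - max (-(μ v - ν v)) 0) = 0 := by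
    simp only [max_zero_sub_max_neg_zero_eq_self, Finset.sum_sub_distrib, hμ.sum_eq_one,
      hν.sum_eq_one, sub_self]
  rw [Finset.sum_sub_distrib] at h
  simp only [neg_sub] at h
  linarith

theorem isCoupling_excessCoupling (hμ : IsProb μ) (hν : IsProb ν) :
    IsCoupling (excessCoupling μ ν) μ ν := by
  set m := ∑ v, max (μ v - ν v) 0 with hm_def
  have hm : ∑ v, max (ν v - μ v) 0 = m := sum_max_sub_zero_comm hμ hν
  have hcancel : ∀ {x : ℝ}, 0 ≤ x → x ≤ m → x * m / m = x := fun hx hxm =>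
    mul_div_cancel_of_imp fun h0 => le_antisymm (h0 ▸ hxm) hx
  have hle_m : ∀ {f : V → ℝ} (v : V), max (f v) 0 ≤ ∑ w, max (f w) 0 := fun v =>
    Finset.single_le_sum (fun w _ => le_max_right _ 0) (Finset.mem_univ v)
  refine ⟨fun a b => add_nonneg ?_ ?_, fun a => ?_, fun b => ?_⟩
  · split_ifs
    exacts [le_min (hμ.1 a) (hν.1 a), le_rfl]
  · exact div_nonneg (mul_nonneg (le_max_right _ _) (le_max_right _ _))
      (Finset.sum_nonneg fun v _ => le_max_right _ _)
  · rw [tsum_fintype]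
    simp only [excessCoupling, Finset.sum_add_distrib, Finset.sum_ite_eq, Finset.mem_univ,
      if_true, ← Finset.sum_div, ← Finset.mul_sum, hm, ← hm_def,
      hcancel (le_max_right _ _) (hle_m a)]
    rcases le_total (μ a) (ν a) with h | h <;> simp [h]
  · rw [tsum_fintype]
    simp only [excessCoupling, Finset.sum_add_distrib, Finset.sum_ite_eq', Finset.mem_univ,
      if_true, ← Finset.sum_div, ← Finset.sum_mul, ← hm_def, mul_comm m,
      hcancel (le_max_right _ _) (hm ▸ hle_m b)]
    rcases le_total (μ b) (ν b) with h | h <;> simp [h]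

theorem W1_le_one_of_support_subset (hμ : IsProb μ) (hν : IsProb ν) {e : Set V} (he : e ∈ H.E)
    (hsupp : Function.support (fun v => ν v - μ v) ⊆ e) : W1 H μ ν ≤ 1 := by
  set m := ∑ v, max (μ v - ν v) 0 with hm_def
  have hmem : ∀ v, μ v ≠ ν v → v ∈ e := fun v hv => hsupp (sub_ne_zero.2 hv.symm)
  have hterm : ∀ a b, (H.dist a b : ℝ) * excessCoupling μ ν a b ≤
      max (μ a - ν a) 0 * max (ν b - μ b) 0 / m := fun a b => by
    have hpq : 0 ≤ max (μ a - ν a) 0 * max (ν b - μ b) 0 / m :=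
      div_nonneg (mul_nonneg (le_max_right _ _) (le_max_right _ _))
        (Finset.sum_nonneg fun v _ => le_max_right _ _)
    rw [excessCoupling, ← hm_def, mul_add]
    by_cases hab : a = b
    · subst hab
      simpa using hpq
    rw [if_neg hab, mul_zero, zero_add]
    by_cases hμa : μ a ≤ ν a
    · simp [max_eq_right (sub_nonpos.2 hμa)]
    by_cases hνb : ν b ≤ μ b
    · simp [max_eq_right (sub_nonpos.2 hνb)]
    have hd : (H.dist a b : ℝ) ≤ 1 := by
      exact_mod_cast dist_le_one_of_mem he (hmem a (by linarith)) (hmem b (by linarith))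
    nlinarith
  have hm1 : m ≤ 1 := by
    rw [← hμ.sum_eq_one]
    exact Finset.sum_le_sum fun v _ => max_le (by linarith [hν.1 v]) (hμ.1 v)
  calc W1 H μ ν ≤ ∑' p : V × V, (H.dist p.1 p.2 : ℝ) * excessCoupling μ ν p.1 p.2 :=
        W1_le_of_isCoupling (isCoupling_excessCoupling hμ hν)
    _ ≤ ∑ a, ∑ b, max (μ a - ν a) 0 * max (ν b - μ b) 0 / m := by
        rw [tsum_fintype, Fintype.sum_prod_type]
        exact Finset.sum_le_sum fun a _ => Finset.sum_le_sum fun b _ => hterm a b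
    _ = m * m / m := by
        simp only [← Finset.sum_div, ← Finset.mul_sum, ← Finset.sum_mul,
          sum_max_sub_zero_comm hμ hν, ← hm_def]
    _ ≤ 1 := by rwa [mul_self_div_self]

theorem abs_sum_mul_sub_le_W1 (hμ : IsProb μ) (hν : IsProb ν) {g : V → ℝ}
    (hg : ∀ a b, |g a - g b| ≤ H.dist a b) : |∑ v, g v * (ν v - μ v)| ≤ W1 H μ ν := by
  refine le_csInf ⟨_, _, isCoupling_mul hμ hν, rfl⟩ ?_
  rintro _ ⟨π, hπ, rfl⟩
  have hrow : ∀ a, ∑ b, π a b = μ a := fun a => by rw [← hπ.2.1 a, tsum_fintype]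
  have hcol : ∀ b, ∑ a, π a b = ν b := fun b => by rw [← hπ.2.2 b, tsum_fintype]
  have hsum : ∑ v, g v * (ν v - μ v) = ∑ a, ∑ b, π a b * (g b - g a) := by
    simp only [mul_sub, Finset.sum_sub_distrib, ← hrow, ← hcol, Finset.mul_sum]
    rw [Finset.sum_comm (f := fun b a => g b * π a b)]
    simp only [mul_comm]
  rw [hsum, tsum_fintype, Fintype.sum_prod_type]
  refine (Finset.abs_sum_le_sum_abs _ _).trans (Finset.sum_le_sum fun a _ =>
    (Finset.abs_sum_le_sum_abs _ _).trans (Finset.sum_le_sum fun b _ => ?_))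
  rw [abs_mul, abs_of_nonneg (hπ.1 a b), mul_comm, abs_sub_comm]
  exact mul_le_mul_of_nonneg_right (hg a b) (hπ.1 a b)

end Finite

/-- `∑ v, distLevel H x j v * μ v` measures the mass of `μ` beyond the sphere of radius `j`
around `x`; moving mass inside one hyperedge can change it for at most one `j`. -/
noncomputable def distLevel {V : Type*} (H : Hypergraph' V) (x : V) (j : ℕ) (v : V) : ℝ :=
  min (max ((H.dist x v : ℝ) - j) 0) 1

namespace distLevel

variable {V : Type*} {H : Hypergraph' V} {x : V} {j : ℕ}

theorem mem_Icc (v : V) : distLevel H x j v ∈ Icc (0 : ℝ) 1 :=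
  ⟨le_min (le_max_right _ _) zero_le_one, min_le_right _ _⟩

theorem eq_zero {v : V} (hv : H.dist x v ≤ j) : distLevel H x j v = 0 := by
  have : (H.dist x v : ℝ) ≤ j := by exact_mod_cast hv
  simp [distLevel, this]

theorem eq_one {v : V} (hv : j + 1 ≤ H.dist x v) : distLevel H x j v = 1 := by
  have : (j : ℝ) + 1 ≤ H.dist x v := by exact_mod_cast hv
  simp [distLevel, show (1 : ℝ) ≤ H.dist x v - j by linarith]

theorem abs_sub_le (hconn : H.Connected) (a b : V) :
    |distLevel H x j a - distLevel H x j b| ≤ H.dist a b :=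
  calc |distLevel H x j a - distLevel H x j b|
      ≤ |max ((H.dist x a : ℝ) - j) 0 - max ((H.dist x b : ℝ) - j) 0| := by
        simpa [distLevel] using abs_min_sub_min_le_max (max ((H.dist x a : ℝ) - j) 0) 1
          (max ((H.dist x b : ℝ) - j) 0) 1
    _ ≤ |((H.dist x a : ℝ) - j) - ((H.dist x b : ℝ) - j)| := abs_max_sub_max_le_abs _ _ _
    _ ≤ H.dist a b := by
        rw [sub_sub_sub_cancel_right]
        exact hconn.abs_dist_sub_dist_le x a b

variable [Fintype V] {σ : V → ℝ}

theorem sum_mul_eq_zero (hσ : ∀ v, σ v ≠ 0 → H.dist x v ≤ j) :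
    ∑ v, distLevel H x j v * σ v = 0 :=
  Finset.sum_eq_zero fun v _ => by
    by_cases hv : σ v = 0
    · simp [hv]
    · rw [eq_zero (hσ v hv), zero_mul]

theorem sum_mul_eq_sum (hσ : ∀ v, σ v ≠ 0 → j + 1 ≤ H.dist x v) :
    ∑ v, distLevel H x j v * σ v = ∑ v, σ v :=
  Finset.sum_congr rfl fun v _ => by
    by_cases hv : σ v = 0
    · simp [hv]
    · rw [eq_one (hσ v hv), one_mul]

theorem sum_mul_le_sum_sub (hσ : ∀ v, 0 ≤ σ v) :
    ∑ v, distLevel H x j v * σ v ≤ ∑ v, σ v - σ x := by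
  rw [← Finset.sum_erase_eq_sub (Finset.mem_univ x), ← Finset.sum_erase_add _ _ (Finset.mem_univ x),
    eq_zero (by simp), zero_mul, add_zero]
  exact Finset.sum_le_sum fun v _ => mul_le_of_le_one_left (hσ v) (mem_Icc v).2

theorem le_sum_mul (hσ : ∀ v, 0 ≤ σ v) {y : V} (hy : j + 1 ≤ H.dist x y) :
    σ y ≤ ∑ v, distLevel H x j v * σ v :=
  calc σ y = distLevel H x j y * σ y := by rw [eq_one hy, one_mul]
    _ ≤ _ := Finset.single_le_sum (fun v _ => mul_nonneg (mem_Icc v).1 (hσ v)) (Finset.mem_univ y)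

theorem exists_of_sum_mul_ne_zero (hσ : ∑ v, σ v = 0)
    (hj : ∑ v, distLevel H x j v * σ v ≠ 0) :
    (∃ v, σ v ≠ 0 ∧ H.dist x v ≤ j) ∧ ∃ w, σ w ≠ 0 ∧ j + 1 ≤ H.dist x w := by
  constructor <;> by_contra! h
  · exact hj ((sum_mul_eq_sum fun v hv => h v hv).trans hσ)
  · exact hj (sum_mul_eq_zero fun v hv => Nat.lt_succ_iff.1 (h v hv))

theorem eq_of_sum_mul_ne_zero (hconn : H.Connected) {e : Set V} (he : e ∈ H.E)
    (hsupp : Function.support σ ⊆ e) (hσ : ∑ v, σ v = 0) {k : ℕ}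
    (hj : ∑ v, distLevel H x j v * σ v ≠ 0) (hk : ∑ v, distLevel H x k v * σ v ≠ 0) :
    j = k := by
  have hle : ∀ {j k : ℕ}, ∑ v, distLevel H x j v * σ v ≠ 0 →
      ∑ v, distLevel H x k v * σ v ≠ 0 → j ≤ k := fun hj hk => by
    obtain ⟨-, w, hw, hjw⟩ := exists_of_sum_mul_ne_zero hσ hj
    obtain ⟨⟨v, hv, hvk⟩, -⟩ := exists_of_sum_mul_ne_zero hσ hk
    have := hconn.dist_triangle x v w
    have := Hypergraph'.dist_le_one_of_mem he (hsupp hv) (hsupp hw)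
    omega
  exact le_antisymm (hle hj hk) (hle hk hj)

end distLevel

section Finite

variable {V : Type*} [Fintype V] {H : Hypergraph' V} {h : ℝ → ℝ} {D0 D1 : ℝ}
  {μ ν : V → ℝ} {I : ℕ} {ξ : ℕ → V → ℝ}

theorem WhAdmissible.W1_mem_Icc (hadm : WhAdmissible H μ ν I ξ) {i : ℕ} (hi : i < I) :
    W1 H (ξ i) (ξ (i + 1)) ∈ Icc (0 : ℝ) 1 :=
  let ⟨_, he, hsupp⟩ := hadm.2.2.2 i hi
  ⟨W1_nonneg _ _ _,
    W1_le_one_of_support_subset (hadm.2.2.1 i hi.le) (hadm.2.2.1 (i + 1) hi) he hsupp⟩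

theorem Wh_le_sum (hc : CostFn h D0 D1) (hadm : WhAdmissible H μ ν I ξ) :
    Wh H h μ ν ≤ ∑ i ∈ Finset.range I, h (W1 H (ξ i) (ξ (i + 1))) := by
  refine csInf_le ⟨0, ?_⟩ ⟨I, ξ, hadm, rfl⟩
  rintro _ ⟨I', ξ', hadm', rfl⟩
  exact Finset.sum_nonneg fun i hi => hc.nonneg _ (hadm'.W1_mem_Icc (Finset.mem_range.1 hi))

theorem Wh_le_of_whAdmissible (hc : CostFn h D0 D1) (hadm : WhAdmissible H μ ν I ξ) :
    Wh H h μ ν ≤ I * h 1 := by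
  refine (Wh_le_sum hc hadm).trans <|
    (Finset.sum_le_card_nsmul _ _ (h 1) fun i hi => ?_).trans (by simp)
  have := hadm.W1_mem_Icc (Finset.mem_range.1 hi)
  exact hc.mono this ⟨zero_le_one, le_rfl⟩ this.2

theorem sum_apply_le_Wh (hconn : H.Connected) (hc : CostFn h D0 D1)
    (hadm : ∃ I ξ, WhAdmissible H μ ν I ξ) (x : V) (S : Finset ℕ) (a : ℕ → ℝ)
    (ha : ∀ j ∈ S, a j ∈ Icc (0 : ℝ) 1)
    (hle : ∀ j ∈ S, a j ≤ ∑ v, distLevel H x j v * ν v - ∑ v, distLevel H x j v * μ v) :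
    ∑ j ∈ S, h (a j) ≤ Wh H h μ ν := by
  obtain ⟨I₀, ξ₀, hadm₀⟩ := hadm
  refine le_csInf ⟨_, I₀, ξ₀, hadm₀, rfl⟩ ?_
  rintro _ ⟨I, ξ, hadm, rfl⟩
  set δ : ℕ → ℕ → ℝ := fun i j => ∑ v, distLevel H x j v * (ξ (i + 1) v - ξ i v)
  have hδ : ∀ i < I, ∀ j, |δ i j| ≤ W1 H (ξ i) (ξ (i + 1)) := fun i hi j =>
    abs_sum_mul_sub_le_W1 (hadm.2.2.1 i hi.le) (hadm.2.2.1 (i + 1) hi)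
      (distLevel.abs_sub_le hconn)
  have htel : ∀ j, ∑ i ∈ Finset.range I, δ i j =
      ∑ v, distLevel H x j v * ν v - ∑ v, distLevel H x j v * μ v := fun j => by
    set F : ℕ → ℝ := fun i => ∑ v, distLevel H x j v * ξ i v
    calc ∑ i ∈ Finset.range I, δ i j = ∑ i ∈ Finset.range I, (F (i + 1) - F i) :=
          Finset.sum_congr rfl fun i _ => by simp only [δ, F, mul_sub, Finset.sum_sub_distrib]
      _ = F I - F 0 := Finset.sum_range_sub F I
      _ = _ := by simp only [F, hadm.1, hadm.2.1]
  have hdisj : (S : Set ℕ).PairwiseDisjoint fun j => {i ∈ Finset.range I | δ i j ≠ 0} := by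
    intro j _ k _ hjk
    refine Finset.disjoint_left.2 fun i hij hik => hjk ?_
    rw [Finset.mem_filter, Finset.mem_range] at hij hik
    obtain ⟨e, he, hsupp⟩ := hadm.2.2.2 i hij.1
    have hσ : ∑ v, (ξ (i + 1) v - ξ i v) = 0 := by
      rw [Finset.sum_sub_distrib, (hadm.2.2.1 (i + 1) hij.1).sum_eq_one,
        (hadm.2.2.1 i hij.1.le).sum_eq_one, sub_self]
    exact distLevel.eq_of_sum_mul_ne_zero hconn he hsupp hσ hij.2 hik.2
  refine hc.sum_apply_le_of_pairwiseDisjoint S _ _ (fun j _ => Finset.filter_subset _ _) hdisj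
    _ (fun i hi => hadm.W1_mem_Icc (Finset.mem_range.1 hi)) a ha fun j hj => ?_
  calc a j ≤ ∑ i ∈ Finset.range I, δ i j := (htel j).symm ▸ hle j hj
    _ = ∑ i ∈ Finset.range I with δ i j ≠ 0, δ i j := (Finset.sum_filter_ne_zero _).symm
    _ ≤ _ := Finset.sum_le_sum fun i hi =>
        (le_abs_self _).trans (hδ i (Finset.mem_range.1 (Finset.mem_filter.1 hi).1) j)

end Finite

section Admissible

variable {V : Type*} {H : Hypergraph' V}

theorem isProb_dirac (z : V) : IsProb (dirac z) :=
  ⟨fun v => by unfold dirac; split_ifs <;> norm_num,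
    (Set.finite_singleton z).subset fun v hv => by by_contra h; exact hv (if_neg h),
    tsum_ite_eq z 1⟩

namespace WhAdmissible

variable {μ ρ ν : V → ℝ} {I J : ℕ} {ξ ζ : ℕ → V → ℝ}

theorem trans (h1 : WhAdmissible H μ ρ I ξ) (h2 : WhAdmissible H ρ ν J ζ) :
    WhAdmissible H μ ν (I + J) fun i => if i ≤ I then ξ i else ζ (i - I) := by
  obtain ⟨h10, h1I, h1p, h1e⟩ := h1
  obtain ⟨h20, h2J, h2p, h2e⟩ := h2
  have hglue : ∀ i, I ≤ i → (if i ≤ I then ξ i else ζ (i - I)) = ζ (i - I) := by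
    intro i hi
    split_ifs with hiI
    · rw [show i = I by omega, h1I, Nat.sub_self, h20]
    · rfl
  refine ⟨by simp [h10], ?_, fun i hi => ?_, fun i hi => ?_⟩
  · show (if I + J ≤ I then ξ (I + J) else ζ (I + J - I)) = ν
    rw [hglue _ (by omega), Nat.add_sub_cancel_left, h2J]
  · by_cases hiI : i ≤ I
    · simpa [hiI] using h1p i hiI
    · simpa [hiI] using h2p (i - I) (by omega)
  · by_cases hiI : i < I
    · simpa [hiI.le, Nat.succ_le_of_lt hiI] using h1e i hiI
    · obtain ⟨e, he, hsupp⟩ := h2e (i - I) (by omega)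
      refine ⟨e, he, ?_⟩
      show Function.support (fun v => (if i + 1 ≤ I then ξ (i + 1) else ζ (i + 1 - I)) v -
        (if i ≤ I then ξ i else ζ (i - I)) v) ⊆ e
      rwa [hglue i (by omega), hglue (i + 1) (by omega), show i + 1 - I = i - I + 1 by omega]

theorem symm (h : WhAdmissible H μ ν I ξ) : WhAdmissible H ν μ I fun i => ξ (I - i) := by
  obtain ⟨h0, hI, hp, he⟩ := h
  refine ⟨by simpa using hI, by simpa using h0, fun i hi => hp (I - i) (by omega), fun i hi => ?_⟩
  obtain ⟨e, he, hsupp⟩ := he (I - (i + 1)) (by omega)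
  refine ⟨e, he, fun v hv => hsupp ?_⟩
  rw [show I - (i + 1) + 1 = I - i by omega]
  exact fun h0 => hv (by linarith)

end WhAdmissible

theorem whAdmissible_of_support_subset {μ ν : V → ℝ} (hμ : IsProb μ) (hν : IsProb ν)
    {e : Set V} (he : e ∈ H.E) (hsupp : Function.support (fun v => ν v - μ v) ⊆ e) :
    WhAdmissible H μ ν 1 fun i => if i = 0 then μ else ν :=
  ⟨rfl, rfl, fun i _ => by dsimp only; split_ifs <;> assumption,
    fun i hi => ⟨e, he, by simpa [show i = 0 by omega] using hsupp⟩⟩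

theorem Hypergraph'.IsPath.whAdmissible_dirac {x y : V} {n : ℕ} (hp : H.IsPath x y n) :
    ∃ ξ, WhAdmissible H (dirac x) (dirac y) n ξ := by
  obtain ⟨f, hf0, hfn, hstep⟩ := hp
  refine ⟨fun i => dirac (f i), by simp [hf0], by simp [hfn], fun i _ => isProb_dirac _,
    fun i hi => ?_⟩
  obtain ⟨e, he, h1, h2⟩ := hstep i hi
  refine ⟨e, he, fun v hv => ?_⟩
  by_contra hve
  have hv1 : v ≠ f (i + 1) := fun h => hve (h ▸ h2)
  have hv2 : v ≠ f i := fun h => hve (h ▸ h1)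
  simp [dirac, hv1, hv2] at hv

end Admissible

section RandomWalk

variable {V : Type*} {H : Hypergraph' V} {α : ℝ} {z : V}

theorem rw_one (z : V) : rw H 1 z = dirac z := by
  funext v
  simp [rw, dirac]

@[simp]
theorem rw_self : rw H α z z = α := by
  simp [rw]

theorem rw_nonneg (hα : α ∈ Icc (0 : ℝ) 1) (v : V) : 0 ≤ rw H α z v := by
  unfold rw
  split_ifs
  exacts [hα.1, div_nonneg (sub_nonneg.2 hα.2) (Nat.cast_nonneg _), le_rfl]

theorem dist_le_one_of_rw_ne_zero {v : V} (hv : rw H α z v ≠ 0) : H.dist z v ≤ 1 := by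
  unfold rw at hv
  split_ifs at hv with hvz hadj
  · simp [hvz]
  · exact Hypergraph'.dist_le_one_of_adj hadj
  · exact absurd rfl hv

noncomputable def starMeasure (z : V) (s : Finset V) (w : ℝ) : V → ℝ :=
  fun v => if v = z then 1 - s.card * w else if v ∈ s then w else 0

variable [Fintype V]

theorem isProb_starMeasure {s : Finset V} {w : ℝ} (hz : z ∉ s) (hw : 0 ≤ w)
    (hsw : s.card * w ≤ 1) : IsProb (starMeasure z s w) := by
  refine ⟨fun v => ?_, Set.toFinite _, ?_⟩
  · unfold starMeasure
    split_ifs <;> linarith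
  · have hdec : starMeasure z s w =
        fun v => (if v = z then 1 - s.card * w else 0) + if v ∈ s then w else 0 := by
      funext v
      by_cases hv : v = z
      · simp [starMeasure, hv, hz]
      · simp [starMeasure, hv]
    rw [tsum_fintype, hdec, Finset.sum_add_distrib, Finset.sum_ite_eq', Finset.sum_ite_mem,
      Finset.univ_inter, Finset.sum_const, nsmul_eq_mul]
    simp

theorem starMeasure_neighbors (hdeg : 0 < H.degree z) :
    starMeasure z {v | H.Adj z v}.toFinset ((1 - α) / H.degree z) = rw H α z := by
  have hcard : ({v | H.Adj z v}.toFinset.card : ℝ) = H.degree z := by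
    rw [Hypergraph'.degree, Set.ncard_eq_toFinset_card']
  funext v
  by_cases hv : v = z
  · simp only [starMeasure, rw, hv, if_true, hcard]
    field_simp
    ring
  · simp [starMeasure, rw, hv]

theorem exists_whAdmissible_dirac_rw (hα : α ∈ Icc (0 : ℝ) 1) (hdeg : 0 < H.degree z) :
    ∃ I ξ, WhAdmissible H (dirac z) (rw H α z) I ξ := by
  set N := {v | H.Adj z v}.toFinset
  set w := (1 - α) / H.degree z
  have hw : 0 ≤ w := div_nonneg (sub_nonneg.2 hα.2) (Nat.cast_nonneg _)
  have hNw : N.card * w ≤ 1 := by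
    have : (N.card : ℝ) = H.degree z := by rw [Hypergraph'.degree, Set.ncard_eq_toFinset_card']
    rw [this, mul_div_cancel₀ _ (by exact_mod_cast hdeg.ne')]
    linarith [hα.1]
  have hzN : z ∉ N := by simp [N, Hypergraph'.Adj]
  have hprob : ∀ s ⊆ N, IsProb (starMeasure z s w) := fun s hs =>
    isProb_starMeasure (fun h => hzN (hs h)) hw
      ((mul_le_mul_of_nonneg_right (by exact_mod_cast Finset.card_le_card hs) hw).trans hNw)
  suffices ∀ s ⊆ N, ∃ I ξ, WhAdmissible H (dirac z) (starMeasure z s w) I ξ by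
    rw [← starMeasure_neighbors hdeg]
    exact this N subset_rfl
  intro s
  induction s using Finset.induction_on with
  | empty =>
    refine fun _ => ⟨0, fun _ => dirac z, rfl, ?_, fun _ _ => isProb_dirac z, by simp⟩
    funext v
    simp [starMeasure, dirac]
  | @insert b s hbs ih =>
    intro hsub
    obtain ⟨I, ξ, hadm⟩ := ih ((Finset.subset_insert b s).trans hsub)
    have hb : H.Adj z b := by simpa [N] using hsub (Finset.mem_insert_self b s)
    obtain ⟨hzb, e, he, hze, hbe⟩ := hb
    have hstep := whAdmissible_of_support_subset (hprob s ((Finset.subset_insert b s).trans hsub))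
      (hprob _ hsub) he fun v hv => ?_
    · exact ⟨_, _, hadm.trans hstep⟩
    by_contra hve
    have hvz : v ≠ z := fun h => hve (h ▸ hze)
    have hvb : v ≠ b := fun h => hve (h ▸ hbe)
    simp [starMeasure, hvz, hvb] at hv

theorem isProb_rw (hα : α ∈ Icc (0 : ℝ) 1) (hdeg : 0 < H.degree z) : IsProb (rw H α z) := by
  obtain ⟨I, ξ, hadm⟩ := exists_whAdmissible_dirac_rw hα hdeg
  exact hadm.2.1 ▸ hadm.2.2.1 I le_rfl

end RandomWalk

theorem sum_range_ite_zero_or_sub_one (d : ℕ) (hd : 2 ≤ d) (p q : ℝ) :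
    ∑ j ∈ Finset.range d, (if j = 0 ∨ j = d - 1 then p else q) = 2 * p + ((d : ℝ) - 2) * q := by
  obtain ⟨n, rfl⟩ : ∃ n, d = n + 2 := ⟨d - 2, by omega⟩
  rw [Finset.sum_range_succ, Finset.sum_range_succ', Finset.sum_congr rfl fun j hj => if_neg
    (by simp at hj; omega)]
  simp
  ring

theorem le_sum_distLevel_mul_rw_sub {V : Type*} [Fintype V] {H : Hypergraph' V}
    (hconn : H.Connected) {α : ℝ} (hα : α ∈ Icc (0 : ℝ) 1) {x y : V} (hd : 2 ≤ H.dist x y)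
    {j : ℕ} (hj : j < H.dist x y) :
    (if j = 0 ∨ j = H.dist x y - 1 then α else 1) ≤
      ∑ v, distLevel H x j v * rw H α y v - ∑ v, distLevel H x j v * rw H α x v := by
  set d := H.dist x y
  have hxy : x ≠ y := by rintro rfl; simp [d] at hd
  have hsum_x := (isProb_rw hα (hconn.degree_pos hxy)).sum_eq_one
  have hsum_y := (isProb_rw hα (hconn.degree_pos hxy.symm)).sum_eq_one
  have hx0 : ∑ v, distLevel H x 0 v * rw H α x v ≤ 1 - α := by
    simpa [hsum_x] using
      distLevel.sum_mul_le_sum_sub (H := H) (x := x) (j := 0) (rw_nonneg hα (z := x) (H := H))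
  have hxj : ∀ j, 1 ≤ j → ∑ v, distLevel H x j v * rw H α x v = 0 := fun j hj =>
    distLevel.sum_mul_eq_zero fun v hv => (dist_le_one_of_rw_ne_zero hv).trans hj
  have hyj : ∀ j, j + 2 ≤ d → ∑ v, distLevel H x j v * rw H α y v = 1 := fun j hj => by
    rw [← hsum_y]
    refine distLevel.sum_mul_eq_sum fun v hv => ?_
    have := hconn.dist_triangle x v y
    have := dist_le_one_of_rw_ne_zero hv
    rw [hconn.dist_comm v y] at *
    omega
  have hyd : α ≤ ∑ v, distLevel H x (d - 1) v * rw H α y v := by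
    simpa using distLevel.le_sum_mul (H := H) (j := d - 1) (rw_nonneg hα (z := y))
      (show d - 1 + 1 ≤ d by omega)
  rcases Nat.eq_zero_or_pos j with rfl | hj0
  · simp only [true_or, if_true]
    linarith [hyj 0 (by omega)]
  by_cases hjd : j = d - 1
  · simp only [hjd, or_true, if_true]
    linarith [hxj (d - 1) (by omega)]
  · rw [if_neg (by omega), hyj j (by omega), hxj j hj0, sub_zero]

section Curvature

variable {V : Type*} [Fintype V] {H : Hypergraph' V} (hconn : H.Connected)
  {h : ℝ → ℝ} {D0 D1 : ℝ} (hc : CostFn h D0 D1) {x y : V}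
include hconn hc

/-- Levels `0` and `d - 1` only force `h α`: the lazy walks keep mass `α` at their centres. -/
theorem Wh_rw_ge {α : ℝ} (hα : α ∈ Icc (0 : ℝ) 1) (hd : 2 ≤ H.dist x y) :
    2 * h α + ((H.dist x y : ℝ) - 2) * h 1 ≤ Wh H h (rw H α x) (rw H α y) := by
  have hxy : x ≠ y := by rintro rfl; simp at hd
  have hadm : ∃ I ξ, WhAdmissible H (rw H α x) (rw H α y) I ξ := by
    obtain ⟨_, _, hx⟩ := exists_whAdmissible_dirac_rw hα (hconn.degree_pos hxy)
    obtain ⟨_, _, hy⟩ := exists_whAdmissible_dirac_rw hα (hconn.degree_pos hxy.symm)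
    obtain ⟨_, hxy⟩ := (hconn.isPath_dist x y).whAdmissible_dirac
    exact ⟨_, _, hx.symm.trans (hxy.trans hy)⟩
  have hsum := sum_range_ite_zero_or_sub_one _ hd (h α) (h 1)
  simp only [← apply_ite h] at hsum
  rw [← hsum]
  refine sum_apply_le_Wh hconn hc hadm x _ _ (fun j _ => ?_) fun j hj =>
    le_sum_distLevel_mul_rw_sub hconn hα hd (Finset.mem_range.1 hj)
  split_ifs
  exacts [hα, ⟨zero_le_one, le_rfl⟩]

theorem Wh_dirac_eq (hd : 2 ≤ H.dist x y) : Wh H h (dirac x) (dirac y) = H.dist x y * h 1 := by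
  obtain ⟨_, hpath⟩ := (hconn.isPath_dist x y).whAdmissible_dirac
  refine le_antisymm (Wh_le_of_whAdmissible hc hpath) ?_
  have := Wh_rw_ge hconn hc ⟨zero_le_one, le_rfl⟩ hd
  simp only [rw_one] at this
  linarith

theorem ORic_le {α : ℝ} (hα : α ∈ Icc (0 : ℝ) 1) (hd : 2 ≤ H.dist x y) :
    ORic H h α x y ≤ 2 * (h 1 - h α) / (H.dist x y * h 1) := by
  have hpos : 0 < (H.dist x y : ℝ) * h 1 :=
    mul_pos (by exact_mod_cast (by omega : 0 < H.dist x y)) hc.apply_one_pos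
  rw [ORic, Wh_dirac_eq hconn hc hd]
  calc 1 - Wh H h (rw H α x) (rw H α y) / (H.dist x y * h 1)
      ≤ 1 - (2 * h α + ((H.dist x y : ℝ) - 2) * h 1) / (H.dist x y * h 1) := by
        gcongr
        exact Wh_rw_ge hconn hc hα hd
    _ = 2 * (h 1 - h α) / (H.dist x y * h 1) := by
        rw [one_sub_div hpos.ne']
        ring

end Curvature

theorem hLLY_upper_bound_general {V : Type*} (H : Hypergraph' V)
    (hconn : H.Connected)
    (h : ℝ → ℝ) (D0 D1 : ℝ) (hc : CostFn h D0 D1)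
    (x y : V) (hd : 2 ≤ H.dist x y) :
    hLLY H h x y ≤ 2 * D1 / (h 1 * (H.dist x y : ℝ)) := by
  have hh1 := hc.apply_one_pos
  have hbound : 0 ≤ 2 * D1 / (h 1 * (H.dist x y : ℝ)) := by
    have := hc.D1_nonneg
    positivity
  cases finite_or_infinite V with
  | inr hV => exact (hLLY_eq_zero_of_infinite hconn hc.zero x y).trans_le hbound
  | inl hV =>
    have := Fintype.ofFinite V
    refine Real.liminf_le_of_eventually_le_of_tendsto hbound
      (g := fun α => 2 / (H.dist x y * h 1) * ((h 1 - h α) / (1 - α))) ?_ ?_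
    · filter_upwards [Ioo_mem_nhdsLT zero_lt_one] with α hα
      calc ORic H h α x y / (1 - α) ≤ 2 * (h 1 - h α) / (H.dist x y * h 1) / (1 - α) := by
            gcongr
            · linarith [hα.2]
            · exact ORic_le hconn hc ⟨hα.1.le, hα.2.le⟩ hd
        _ = _ := by ring
    · convert hc.d1.const_mul (2 / (H.dist x y * h 1)) using 2
      ring

/-- Upper bound for the `h`-LLY–Ricci curvature between distant vertices. -/
theorem hLLY_upper_bound {V : Type*} (H : Hypergraph' V)
    (hconn : H.Connected) (hlf : H.LocallyFinite) (hsimp : H.Simple)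
    (h : ℝ → ℝ) (D0 D1 : ℝ) (hc : CostFn h D0 D1)
    (x y : V) (hd : 2 ≤ H.dist x y) :
    hLLY H h x y ≤ 2 * D1 / (h 1 * (H.dist x y : ℝ)) :=
  hLLY_upper_bound_general H hconn h D0 D1 hc x y hd
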